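/- arXiv:2305.01636 — 8 statements merged into one kernel-verified Lean document; each statement's English description precedes it below -/
import Mathlib

section
/- For every real N > 0, the affine polynomial ℓ₀(X) = √(nN) − (X₁ + ⋯ + Xₙ) satisfies the identity ℓ₀(X) = (1/(2√(nN)))·((√(nN) − Σⱼ Xⱼ)² + Σ_{j<j'} (Xⱼ − X_{j'})²) + (√n/(2√N))·(N − Σⱼ Xⱼ²) in ℝ[X₁,…,Xₙ]. -/
/-!
Write `s = √(nN)`, `S = ∑ Xⱼ` and `Q = ∑ Xⱼ²`. The pairwise sum of squares equals `n Q - S²`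
and `√n / (2√N) = n / (2s)`, so the right-hand side is `(s² - 2sS + nN) / (2s)`, which is
`s - S` because `s² = nN`.
-/

open MvPolynomial Finset

theorem Finset.sum_prod_eq_sum_filter_lt_add_sum_diag {ι M : Type*} [LinearOrder ι] [Fintype ι]
    [AddCommMonoid M] (g : ι × ι → M) :
    ∑ p, g p = ∑ p ∈ univ.filter (fun p : ι × ι => p.1 < p.2), (g p + g p.swap) + ∑ i, g (i, i) := by
  have hgt : ∑ p ∈ (univ.filter fun p : ι × ι => ¬p.1 < p.2).filter (fun p => p.2 < p.1), g p
      = ∑ p ∈ univ.filter (fun p : ι × ι => p.1 < p.2), g p.swap :=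
    sum_nbij' Prod.swap Prod.swap (by simp) (by simp; exact fun _ _ h => ⟨h.le, h⟩) (by simp)
      (by simp) (by simp)
  have hdiag : ∑ p ∈ (univ.filter fun p : ι × ι => ¬p.1 < p.2).filter (fun p => ¬p.2 < p.1), g p
      = ∑ i, g (i, i) :=
    sum_nbij' Prod.fst (fun i => (i, i)) (by simp) (by simp)
      (by simp; exact fun a b h₁ h₂ => le_antisymm h₂ h₁) (by simp)
      (by simp; intro a b h₁ h₂; rw [le_antisymm h₁ h₂])
  rw [sum_add_distrib, ← sum_filter_add_sum_filter_not univ (fun p : ι × ι => p.1 < p.2),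
    ← sum_filter_add_sum_filter_not (univ.filter fun p : ι × ι => ¬p.1 < p.2)
      (fun p : ι × ι => p.2 < p.1), hgt, hdiag, add_assoc]

theorem Finset.sum_filter_lt_sub_sq {ι R : Type*} [LinearOrder ι] [Fintype ι] [CommRing R]
    (f : ι → R) :
    ∑ p ∈ univ.filter (fun p : ι × ι => p.1 < p.2), (f p.1 - f p.2) ^ 2
      = Fintype.card ι * ∑ i, f i ^ 2 - (∑ i, f i) ^ 2 := by
  have hsq : Fintype.card ι * ∑ i, f i ^ 2
      = ∑ p ∈ univ.filter (fun p : ι × ι => p.1 < p.2), (f p.1 ^ 2 + f p.2 ^ 2) + ∑ i, f i ^ 2 := by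
    have h := sum_prod_eq_sum_filter_lt_add_sum_diag (fun p : ι × ι => f p.1 ^ 2)
    simpa only [Fintype.sum_prod_type, sum_const, card_univ, nsmul_eq_mul, mul_sum,
      Prod.fst_swap] using h
  have hmul : (∑ i, f i) ^ 2
      = ∑ p ∈ univ.filter (fun p : ι × ι => p.1 < p.2), (f p.1 * f p.2 + f p.2 * f p.1)
        + ∑ i, f i ^ 2 := by
    rw [sq, sum_mul_sum, ← Fintype.sum_prod_type',
      sum_prod_eq_sum_filter_lt_add_sum_diag (fun p => f p.1 * f p.2)]
    simp [sq]
  have hexp : ∑ p ∈ univ.filter (fun p : ι × ι => p.1 < p.2), (f p.1 - f p.2) ^ 2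
      = ∑ p ∈ univ.filter (fun p : ι × ι => p.1 < p.2), (f p.1 ^ 2 + f p.2 ^ 2)
        - ∑ p ∈ univ.filter (fun p : ι × ι => p.1 < p.2), (f p.1 * f p.2 + f p.2 * f p.1) := by
    rw [← sum_sub_distrib]
    exact sum_congr rfl fun _ _ => by ring
  rw [hexp]
  linear_combination hmul - hsq

theorem stmt_1 (n : ℕ) (hn : 1 ≤ n) (N : ℝ) (hN : 0 < N) :
    (C (Real.sqrt (n * N)) - ∑ j, X j : MvPolynomial (Fin n) ℝ) =
      C (1 / (2 * Real.sqrt (n * N))) *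
        ((C (Real.sqrt (n * N)) - ∑ j, X j) ^ 2 +
          ∑ p ∈ Finset.univ.filter (fun p : Fin n × Fin n => p.1 < p.2),
            (X p.1 - X p.2) ^ 2) +
      C (Real.sqrt n / (2 * Real.sqrt N)) * (C N - ∑ j, X j ^ 2) := by
  have hcoeff : Real.sqrt n / (2 * Real.sqrt N) = 1 / (2 * Real.sqrt (n * N)) * n := by
    rw [Real.sqrt_mul n.cast_nonneg]
    field_simp
    rw [Real.sq_sqrt n.cast_nonneg]
  set s := Real.sqrt (n * N)
  have hs_sq : (C s : MvPolynomial (Fin n) ℝ) ^ 2 = (n : MvPolynomial (Fin n) ℝ) * C N := by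
    rw [← map_pow, Real.sq_sqrt (by positivity), map_mul, map_natCast]
  have hinv : (C (1 / (2 * s)) : MvPolynomial (Fin n) ℝ) * (2 * C s) = 1 := by
    rw [← map_ofNat C 2, ← map_mul, ← map_mul, one_div_mul_cancel, map_one]
    have : 0 < s := Real.sqrt_pos.mpr (by positivity)
    positivity
  rw [sum_filter_lt_sub_sq, Fintype.card_fin, hcoeff, map_mul, map_natCast]
  linear_combination (∑ j, (X j : MvPolynomial (Fin n) ℝ) - C s) * hinv + C (1 / (2 * s)) * hs_sq
end

section
/- For every real N > 0, the affine polynomials ℓ₀(X) = √(nN) − Σ_{j=1}^{n} Xⱼ and ℓᵢ(X) = Xᵢ + √N for i = 1,…,n all belong to the quadratic module generated by the single polynomial N − Σ_{j=1}^{n} Xⱼ² in ℝ[X₁,…,Xₙ]. -/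
/-!
If `s ≥ 0` and `s² = N ∑ aᵢ²`, then `ℓ = s + ∑ aᵢ Xᵢ` satisfies
`4 s ℓ = 2 ℓ² + ∑ᵢⱼ (aᵢ Xⱼ - aⱼ Xᵢ)² + 2 (∑ aᵢ²) (N - ∑ Xᵢ²)`,
which is Lagrange's identity `2 ((∑ aᵢ²)(∑ Xᵢ²) - (∑ aᵢ Xᵢ)²) = ∑ᵢⱼ (aᵢ Xⱼ - aⱼ Xᵢ)²` in disguise.
Dividing by `4 s > 0` puts `ℓ` in the quadratic module; `ℓ₀` and `ℓᵢ` are the cases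
`a = (-1, …, -1)` and `a = eᵢ`.
-/

open MvPolynomial

/-- Membership in the quadratic module generated by a single element `g`:
`p = σ₀ + σ₁ * g` with `σ₀, σ₁` sums of squares. -/
def QuadMod1 {R : Type*} [CommRing R] (g p : R) : Prop :=
  ∃ σ₀ σ₁ : R, IsSumSq σ₀ ∧ IsSumSq σ₁ ∧ p = σ₀ + σ₁ * g

theorem Finset.two_mul_sum_sq_mul_sum_sq_sub_sq_sum_mul {R : Type*} [CommRing R] {ι : Type*}
    (s : Finset ι) (a b : ι → R) :
    2 * ((∑ i ∈ s, a i ^ 2) * (∑ i ∈ s, b i ^ 2) - (∑ i ∈ s, a i * b i) ^ 2) =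
      ∑ i ∈ s, ∑ j ∈ s, (a i * b j - a j * b i) ^ 2 := by
  set f : ι → ι → R := fun i j => a i ^ 2 * b j ^ 2 - a i * b i * (a j * b j)
  have hleft : (∑ i ∈ s, a i ^ 2) * (∑ i ∈ s, b i ^ 2) - (∑ i ∈ s, a i * b i) ^ 2 =
      ∑ i ∈ s, ∑ j ∈ s, f i j := by
    simp only [f, sq (∑ i ∈ s, _), Finset.sum_mul_sum, ← Finset.sum_sub_distrib]
  have hright : ∑ i ∈ s, ∑ j ∈ s, (a i * b j - a j * b i) ^ 2 =
      ∑ i ∈ s, ∑ j ∈ s, f i j + ∑ i ∈ s, ∑ j ∈ s, f j i := by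
    simp only [← Finset.sum_add_distrib]
    exact Finset.sum_congr rfl fun i _ => Finset.sum_congr rfl fun j _ => by ring
  rw [hleft, hright, Finset.sum_comm (f := fun i j => f j i)]
  ring

namespace QuadMod1

variable {R : Type*} [CommRing R] {g p : R}

theorem zero (g : R) : QuadMod1 g 0 :=
  ⟨0, 0, .zero, .zero, by simp⟩

theorem isSumSq_mul {t : R} (ht : IsSumSq t) (hp : QuadMod1 g p) : QuadMod1 g (t * p) := by
  obtain ⟨σ₀, σ₁, h₀, h₁, rfl⟩ := hp
  exact ⟨t * σ₀, t * σ₁, ht.mul h₀, ht.mul h₁, by ring⟩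

end QuadMod1

theorem isSumSq_algebraMap_of_nonneg {A : Type*} [CommSemiring A] [Algebra ℝ A] {c : ℝ}
    (hc : 0 ≤ c) : IsSumSq (algebraMap ℝ A c) := by
  rw [← Real.mul_self_sqrt hc, map_mul]
  exact .mul_self _

section Algebra

variable {A ι : Type*} [CommRing A] [Algebra ℝ A] [Fintype ι]

theorem quadMod1_algebraMap_add_sum_smul (x : ι → A) (a : ι → ℝ) {N s : ℝ} (hN : 0 < N)
    (hs₀ : 0 ≤ s) (hs : s ^ 2 = N * ∑ i, a i ^ 2) :
    QuadMod1 (algebraMap ℝ A N - ∑ i, x i ^ 2) (algebraMap ℝ A s + ∑ i, a i • x i) := by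
  rcases hs₀.eq_or_lt with rfl | hs_pos
  · have ha : ∀ i, a i = 0 := by
      have : ∑ i, a i ^ 2 = 0 := by nlinarith
      simpa using (Finset.sum_eq_zero_iff_of_nonneg fun i _ => sq_nonneg (a i)).mp this
    simpa [ha] using QuadMod1.zero _
  set ℓ := algebraMap ℝ A s + ∑ i, a i • x i
  have hcert : QuadMod1 (algebraMap ℝ A N - ∑ i, x i ^ 2) (algebraMap ℝ A (4 * s) * ℓ) := by
    refine ⟨ℓ * ℓ + ℓ * ℓ +
        ∑ i, ∑ j, (algebraMap ℝ A (a i) * x j - algebraMap ℝ A (a j) * x i) ^ 2,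
      algebraMap ℝ A (2 * ∑ i, a i ^ 2),
      ((IsSumSq.mul_self ℓ).add (.mul_self ℓ)).add (.sum fun i _ => .sum_sq _ _),
      isSumSq_algebraMap_of_nonneg (by positivity), ?_⟩
    have hlag := Finset.univ.two_mul_sum_sq_mul_sum_sq_sub_sq_sum_mul (algebraMap ℝ A ∘ a) x
    have hs' := congrArg (algebraMap ℝ A) hs
    simp only [Function.comp_apply, ← map_pow, ← map_sum] at hlag
    simp only [map_pow, map_mul] at hs'
    simp only [ℓ, Algebra.smul_def, map_mul, map_ofNat]
    linear_combination hlag + 2 * hs'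
  have hℓ : ℓ = algebraMap ℝ A (4 * s)⁻¹ * (algebraMap ℝ A (4 * s) * ℓ) := by
    rw [← mul_assoc, ← map_mul, inv_mul_cancel₀ (by positivity), map_one, one_mul]
  rw [hℓ]
  exact hcert.isSumSq_mul (isSumSq_algebraMap_of_nonneg (by positivity))

end Algebra

theorem stmt_3_general (n : ℕ) (N : ℝ) (hN : 0 < N) :
    QuadMod1 (C N - ∑ j, X j ^ 2 : MvPolynomial (Fin n) ℝ)
      (C (Real.sqrt (n * N)) - ∑ j, X j) ∧
    ∀ i : Fin n,
      QuadMod1 (C N - ∑ j, X j ^ 2 : MvPolynomial (Fin n) ℝ)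
        (X i + C (Real.sqrt N)) := by
  refine ⟨?_, fun i => ?_⟩
  · have h := quadMod1_algebraMap_add_sum_smul (A := MvPolynomial (Fin n) ℝ) X (fun _ => -1) hN
      (Real.sqrt_nonneg (n * N)) (by rw [Real.sq_sqrt (by positivity)]; simp [mul_comm])
    simpa [sub_eq_add_neg] using h
  · have h := quadMod1_algebraMap_add_sum_smul (A := MvPolynomial (Fin n) ℝ) X (Pi.single i 1) hN
      (Real.sqrt_nonneg N) (by simp [Real.sq_sqrt hN.le, Pi.single_apply, ite_pow])
    simpa [add_comm] using h

theorem stmt_3 (n : ℕ) (hn : 1 ≤ n) (N : ℝ) (hN : 0 < N) :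
    QuadMod1 (C N - ∑ j, X j ^ 2 : MvPolynomial (Fin n) ℝ)
      (C (Real.sqrt (n * N)) - ∑ j, X j) ∧
    ∀ i : Fin n,
      QuadMod1 (C N - ∑ j, X j ^ 2 : MvPolynomial (Fin n) ℝ)
        (X i + C (Real.sqrt N)) :=
  stmt_3_general n N hN
end

section
/- Let q ∈ ℝ[Y] be a non-constant polynomial positive on ℝ with homogenization q̃(Y,Z). Then the set C = {(y,z) ∈ ℝ² : q̃(y,z) = 1, z ≥ 0} is compact. -/
/-- The homogenization `q̃(Y,Z) = ∑ q_k Y^k Z^(m₀-k)` of a univariate polynomial,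
as a function of `(y, z)`. -/
noncomputable def qhom (q : Polynomial ℝ) (y z : ℝ) : ℝ :=
  ∑ k ∈ Finset.range (q.natDegree + 1), q.coeff k * y ^ k * z ^ (q.natDegree - k)

lemma qhom_continuous (q : Polynomial ℝ) :
    Continuous fun p : ℝ × ℝ => qhom q p.1 p.2 := by
  unfold qhom
  exact continuous_finset_sum _ fun k _ => by fun_prop

lemma qhom_smul (q : Polynomial ℝ) (c y z : ℝ) :
    qhom q (c * y) (c * z) = c ^ q.natDegree * qhom q y z := by
  unfold qhom
  rw [Finset.mul_sum]
  refine Finset.sum_congr rfl fun k hk => ?_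
  have hk' : k ≤ q.natDegree := Nat.lt_succ_iff.mp (Finset.mem_range.mp hk)
  have hc : c ^ k * c ^ (q.natDegree - k) = c ^ q.natDegree := by
    rw [← pow_add, Nat.add_sub_cancel' hk']
  rw [mul_pow, mul_pow, ← hc]
  ring

lemma qhom_eval (q : Polynomial ℝ) (y z : ℝ) (hz : z ≠ 0) :
    qhom q y z = z ^ q.natDegree * q.eval (y / z) := by
  rw [Polynomial.eval_eq_sum_range, Finset.mul_sum]
  unfold qhom
  refine Finset.sum_congr rfl fun k hk => ?_
  have hk' : k ≤ q.natDegree := Nat.lt_succ_iff.mp (Finset.mem_range.mp hk)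
  rw [div_pow, pow_sub₀ z hz hk']
  field_simp

lemma qhom_z0 (q : Polynomial ℝ) (h0 : 0 < q.natDegree) (y : ℝ) :
    qhom q y 0 = q.leadingCoeff * y ^ q.natDegree := by
  unfold qhom
  rw [Finset.sum_eq_single q.natDegree]
  · rw [Nat.sub_self, pow_zero, mul_one, Polynomial.leadingCoeff]
  · intro k hk hne
    have hk' : k ≤ q.natDegree := Nat.lt_succ_iff.mp (Finset.mem_range.mp hk)
    have : 0 < q.natDegree - k := Nat.sub_pos_of_lt (lt_of_le_of_ne hk' hne)
    simp [zero_pow this.ne']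
  · intro h
    exact absurd (Finset.self_mem_range_succ q.natDegree) h

lemma lead_pos (q : Polynomial ℝ) (h0 : 0 < q.natDegree)
    (hpos : ∀ y : ℝ, 0 < q.eval y) : 0 < q.leadingCoeff := by
  by_contra h
  push_neg at h
  have hd : 0 < q.degree := Polynomial.natDegree_pos_iff_degree_pos.mp h0
  have ht := Polynomial.tendsto_atBot_of_leadingCoeff_nonpos q hd h
  obtain ⟨x, hx⟩ := (ht.eventually (Filter.eventually_lt_atBot (0 : ℝ))).exists
  exact absurd (hpos x) (not_lt.mpr hx.le)

theorem stmt_7 (q : Polynomial ℝ) (h0 : 0 < q.natDegree)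
    (hpos : ∀ y : ℝ, 0 < q.eval y) :
    IsCompact {p : ℝ × ℝ | qhom q p.1 p.2 = 1 ∧ 0 ≤ p.2} := by
  set m := q.natDegree with hm
  -- positivity on the half sphere
  set S : Set (ℝ × ℝ) := Metric.sphere (0 : ℝ × ℝ) 1 ∩ {p | 0 ≤ p.2} with hS
  have hSpos : ∀ p ∈ S, 0 < qhom q p.1 p.2 := by
    rintro ⟨y, z⟩ ⟨hs, hz⟩
    simp only [mem_sphere_iff_norm, sub_zero] at hs
    have hz2 : (0:ℝ) ≤ z := hz
    rcases hz2.lt_or_eq with hz' | hz'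
    · rw [qhom_eval q y z hz'.ne']
      exact mul_pos (pow_pos hz' m) (hpos _)
    · -- z = 0, so |y| = 1
      rw [← hz', qhom_z0 q h0]
      have hy : |y| = 1 := by
        rw [Prod.norm_def] at hs
        simpa [← hz', Real.norm_eq_abs] using hs
      rcases abs_eq (by norm_num : (0:ℝ) ≤ 1) |>.mp hy with hy1 | hy1
      · rw [hy1, one_pow, mul_one]
        exact lead_pos q h0 hpos
      · -- y = -1 : use the polynomial q(-X)
        rw [hy1]
        set q' := q.comp (-Polynomial.X) with hq'
        have hdeg' : q'.natDegree = q.natDegree := by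
          rw [hq', Polynomial.natDegree_comp]
          simp
        have hlead' : q'.leadingCoeff = q.leadingCoeff * (-1) ^ m := by
          rw [hq', Polynomial.leadingCoeff_comp (by simp)]
          simp [hm]
        have hpos' : ∀ y : ℝ, 0 < q'.eval y := by
          intro y
          rw [hq', Polynomial.eval_comp]
          simpa using hpos (-y)
        have := lead_pos q' (by rw [hdeg']; exact h0) hpos'
        rw [hlead'] at this
        calc 0 < q.leadingCoeff * (-1) ^ m := this
        _ = q.leadingCoeff * (-1 : ℝ) ^ m := rfl
  have hScompact : IsCompact S :=
    (isCompact_sphere (0 : ℝ × ℝ) 1).inter_right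
      (isClosed_le continuous_const continuous_snd)
  have hSne : S.Nonempty := by
    refine ⟨(1, 0), ?_, by norm_num⟩
    simp [mem_sphere_iff_norm, Prod.norm_def]
  obtain ⟨p₀, hp₀S, hmin⟩ :=
    hScompact.exists_isMinOn hSne ((qhom_continuous q).continuousOn)
  set ε := qhom q p₀.1 p₀.2 with hε
  have hεpos : 0 < ε := hSpos p₀ hp₀S
  -- closedness
  have hclosed : IsClosed {p : ℝ × ℝ | qhom q p.1 p.2 = 1 ∧ 0 ≤ p.2} := by
    have h1 : IsClosed {p : ℝ × ℝ | qhom q p.1 p.2 = 1} :=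
      isClosed_eq (qhom_continuous q) continuous_const
    have h2 : IsClosed {p : ℝ × ℝ | 0 ≤ p.2} :=
      isClosed_le continuous_const continuous_snd
    exact h1.inter h2
  refine Metric.isCompact_of_isClosed_isBounded hclosed ?_
  rw [isBounded_iff_forall_norm_le]
  refine ⟨max 1 (1 / ε), ?_⟩
  rintro ⟨y, z⟩ ⟨h1, h2⟩
  set r := ‖((y, z) : ℝ × ℝ)‖ with hr
  have hrpos : 0 < r := by
    rw [hr, norm_pos_iff]
    intro hzero
    have hy0 : y = 0 := congrArg Prod.fst hzero
    have hz0 : z = 0 := congrArg Prod.snd hzero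
    rw [hy0, hz0, qhom_z0 q h0, zero_pow h0.ne', mul_zero] at h1
    norm_num at h1
  set u : ℝ × ℝ := r⁻¹ • (y, z) with hu
  have huS : u ∈ S := by
    constructor
    · rw [mem_sphere_iff_norm, sub_zero, hu, norm_smul, norm_inv,
        Real.norm_eq_abs, abs_of_pos hrpos, ← hr, inv_mul_cancel₀ hrpos.ne']
    · show 0 ≤ r⁻¹ * z
      exact mul_nonneg (inv_nonneg.mpr hrpos.le) h2
  have hueq : qhom q y z = r ^ m * qhom q u.1 u.2 := by
    have h1 : y = r * u.1 := by
      show y = r * (r⁻¹ * y); field_simp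
    have h2' : z = r * u.2 := by
      show z = r * (r⁻¹ * z); field_simp
    rw [← qhom_smul, ← h1, ← h2']
  have hge : ε ≤ qhom q u.1 u.2 := hmin huS
  have key : r ^ m * ε ≤ 1 := by
    calc r ^ m * ε ≤ r ^ m * qhom q u.1 u.2 :=
          mul_le_mul_of_nonneg_left hge (pow_nonneg hrpos.le m)
      _ = qhom q y z := hueq.symm
      _ = 1 := h1
  have hrm : r ^ m ≤ 1 / ε := by
    rw [le_div_iff₀ hεpos]; exact key
  rcases le_or_gt r 1 with hr1 | hr1
  · exact le_max_of_le_left hr1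
  · refine le_max_of_le_right ?_
    calc r ≤ r ^ m := le_self_pow₀ hr1.le h0.ne'
      _ ≤ 1 / ε := hrm
end

section
/- Under Assumption 2 (S nonempty, each deg_Y gᵢ = mᵢ even, and S∞ = {x ∈ ℝⁿ : g_{1m₁}(x) ≥ 0, …, g_{sm_s}(x) ≥ 0} ⊆ B where B is the closed ball of radius √N), the set S̃ = {(x,y,z) ∈ ℝ^{n+2} : g̃₁(x,y,z) ≥ 0, …, g̃_s(x,y,z) ≥ 0, q̃(y,z) = 1, z ≥ 0} is compact. -/
/-- The homogenization with respect to `Y` of `g ∈ ℝ[X₁,…,Xₙ][Y]`, as a function. -/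
noncomputable def fhom {n : ℕ} (g : Polynomial (MvPolynomial (Fin n) ℝ))
    (x : Fin n → ℝ) (y z : ℝ) : ℝ :=
  ∑ k ∈ Finset.range (g.natDegree + 1),
    MvPolynomial.eval x (g.coeff k) * y ^ k * z ^ (g.natDegree - k)

/-- Membership in the quadratic module generated by `g₁, …, g_s`:
`p = σ₀ + σ₁ g₁ + ⋯ + σ_s g_s` with all `σᵢ` sums of squares. -/
def QuadMod {R : Type*} [CommRing R] {s : ℕ} (g : Fin s → R) (p : R) : Prop :=
  ∃ σ₀ : R, ∃ σ : Fin s → R,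
    IsSumSq σ₀ ∧ (∀ i, IsSumSq (σ i)) ∧ p = σ₀ + ∑ i, σ i * g i

/-- The set `S̃ = {(x,y,z) : g̃ᵢ(x,y,z) ≥ 0 ∀i, q̃(y,z) = 1, z ≥ 0}`. -/
def Stilde {n s : ℕ} (g : Fin s → Polynomial (MvPolynomial (Fin n) ℝ))
    (q : Polynomial ℝ) : Set ((Fin n → ℝ) × ℝ × ℝ) :=
  {p | (∀ i, 0 ≤ fhom (g i) p.1 p.2.1 p.2.2) ∧ qhom q p.2.1 p.2.2 = 1 ∧ 0 ≤ p.2.2}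

/-!
`S̃` is closed, so it suffices to bound it. A positive `q` has even degree `d > 0` and positive
leading coefficient, so `q̃` is positive on the closed half-plane `z ≥ 0` minus the origin; being
homogeneous of degree `d`, it is at least `ε ‖(y, z)‖ ^ d` there, which bounds `(y, z)` on
`{q̃ = 1}`. For `x`: a point with `z > 0` dehomogenizes to `(x, y / z) ∈ S`, where evaluating the
certificate `N - ‖x‖² ∈ M(g₁, …, g_s)` gives `‖x‖² ≤ N`; a point with `z = 0` has `y ≠ 0`, and as
every `mᵢ` is even, `g̃ᵢ(x, y, 0) = g_{i mᵢ}(x) y ^ mᵢ ≥ 0` puts `x` in `S∞ ⊆ B`.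
-/

open Polynomial Bornology

section HomogeneousSum

lemma sum_range_mul_pow_mul_zero_pow {R : Type*} [CommSemiring R] [NoZeroDivisors R]
    (d : ℕ) (c : ℕ → R) (y : R) :
    ∑ k ∈ Finset.range (d + 1), c k * y ^ k * (0 : R) ^ (d - k) = c d * y ^ d := by
  rw [Finset.sum_range_succ, Nat.sub_self, pow_zero, mul_one, Finset.sum_eq_zero, zero_add]
  intro k hk
  rw [zero_pow (by simp at hk; omega), mul_zero]

lemma sum_range_mul_pow_mul_pow_eq_pow_mul {K : Type*} [Field K]
    (d : ℕ) (c : ℕ → K) (y : K) {z : K} (hz : z ≠ 0) :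
    ∑ k ∈ Finset.range (d + 1), c k * y ^ k * z ^ (d - k)
      = z ^ d * ∑ k ∈ Finset.range (d + 1), c k * (y / z) ^ k := by
  rw [Finset.mul_sum]
  refine Finset.sum_congr rfl fun k hk => ?_
  rw [← Nat.sub_add_cancel (Finset.mem_range_succ_iff.mp hk), pow_add, Nat.add_sub_cancel,
    div_pow]
  field_simp

lemma sum_range_mul_pow_mul_pow_mul_mul {R : Type*} [CommSemiring R]
    (d : ℕ) (c : ℕ → R) (t y z : R) :
    ∑ k ∈ Finset.range (d + 1), c k * (t * y) ^ k * (t * z) ^ (d - k)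
      = t ^ d * ∑ k ∈ Finset.range (d + 1), c k * y ^ k * z ^ (d - k) := by
  rw [Finset.mul_sum]
  refine Finset.sum_congr rfl fun k hk => ?_
  rw [← Nat.sub_add_cancel (Finset.mem_range_succ_iff.mp hk), pow_add, Nat.add_sub_cancel]
  ring

end HomogeneousSum

section Homogenization

variable (q : ℝ[X]) {n : ℕ} (g : (MvPolynomial (Fin n) ℝ)[X]) (x : Fin n → ℝ)

lemma qhom_zero_right (y : ℝ) : qhom q y 0 = q.leadingCoeff * y ^ q.natDegree :=
  sum_range_mul_pow_mul_zero_pow _ _ _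

lemma qhom_of_ne_zero (y : ℝ) {z : ℝ} (hz : z ≠ 0) :
    qhom q y z = z ^ q.natDegree * q.eval (y / z) := by
  rw [qhom, sum_range_mul_pow_mul_pow_eq_pow_mul _ _ _ hz, eval_eq_sum_range]

lemma qhom_mul_mul (t y z : ℝ) : qhom q (t * y) (t * z) = t ^ q.natDegree * qhom q y z :=
  sum_range_mul_pow_mul_pow_mul_mul _ _ _ _ _

lemma continuous_qhom : Continuous fun v : ℝ × ℝ => qhom q v.1 v.2 := by
  unfold qhom
  fun_prop

lemma fhom_zero_right (y : ℝ) :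
    fhom g x y 0 = MvPolynomial.eval x g.leadingCoeff * y ^ g.natDegree :=
  sum_range_mul_pow_mul_zero_pow _ _ _

lemma fhom_of_ne_zero (y : ℝ) {z : ℝ} (hz : z ≠ 0) :
    fhom g x y z = z ^ g.natDegree * g.eval₂ (MvPolynomial.eval x) (y / z) := by
  rw [fhom, sum_range_mul_pow_mul_pow_eq_pow_mul _ _ _ hz, eval₂_eq_sum_range]

lemma continuous_fhom :
    Continuous fun p : (Fin n → ℝ) × ℝ × ℝ => fhom g p.1 p.2.1 p.2.2 := by
  have (k : ℕ) := MvPolynomial.continuous_eval (g.coeff k)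
  unfold fhom
  fun_prop

end Homogenization

namespace Polynomial

variable {q : ℝ[X]}

lemma leadingCoeff_pos_of_forall_eval_pos (hdeg : 0 < q.natDegree) (hq : ∀ y, 0 < q.eval y) :
    0 < q.leadingCoeff := by
  by_contra! hlc
  obtain ⟨y, hy⟩ := ((q.tendsto_atBot_of_leadingCoeff_nonpos
    (natDegree_pos_iff_degree_pos.mp hdeg) hlc).eventually
    (Filter.eventually_le_atBot 0)).exists
  exact (hq y).not_ge hy

-- `q(-Y)` is positive too, and its leading coefficient is `(-1) ^ deg q` times that of `q`.
lemma even_natDegree_of_forall_eval_pos (hdeg : 0 < q.natDegree) (hq : ∀ y, 0 < q.eval y) :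
    Even q.natDegree := by
  have hdeg' : (q.comp (-X)).natDegree = q.natDegree := by simp [natDegree_comp]
  have hlc := leadingCoeff_pos_of_forall_eval_pos (hdeg'.symm ▸ hdeg) (fun y => by
    simpa using hq (-y))
  rw [comp_neg_X_leadingCoeff_eq] at hlc
  by_contra hodd
  rw [Nat.not_even_iff_odd.mp hodd |>.neg_one_pow] at hlc
  linarith [leadingCoeff_pos_of_forall_eval_pos hdeg hq]

end Polynomial

lemma qhom_pos {q : ℝ[X]} (hdeg : 0 < q.natDegree) (hq : ∀ y, 0 < q.eval y) {y z : ℝ}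
    (hz : 0 ≤ z) (hyz : (y, z) ≠ 0) : 0 < qhom q y z := by
  rcases hz.eq_or_lt with rfl | hz
  · have hy : y ≠ 0 := fun hy => hyz (by simp [hy])
    rw [qhom_zero_right]
    exact mul_pos (leadingCoeff_pos_of_forall_eval_pos hdeg hq)
      ((even_natDegree_of_forall_eval_pos hdeg hq).pow_pos hy)
  · rw [qhom_of_ne_zero _ _ hz.ne']
    exact mul_pos (pow_pos hz _) (hq _)

lemma isBounded_setOf_le_one_of_homogeneous {E : Type*} [NormedAddCommGroup E]
    [NormedSpace ℝ E] [ProperSpace E] {f : E → ℝ} {C : Set E} {d : ℕ} (hd : 0 < d)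
    (hf : ContinuousOn f C) (hC : IsClosed C) (hcone : ∀ t : ℝ, 0 < t → ∀ v ∈ C, t • v ∈ C)
    (hhom : ∀ t : ℝ, 0 < t → ∀ v ∈ C, f (t • v) = t ^ d * f v)
    (hpos : ∀ v ∈ C, v ≠ 0 → 0 < f v) :
    IsBounded {v | v ∈ C ∧ f v ≤ 1} := by
  obtain ⟨ε, hε, hεf⟩ := ((isCompact_sphere 0 1).inter_left hC).exists_forall_le'
    (hf.mono Set.inter_subset_left) fun u hu => hpos u hu.1 (ne_zero_of_mem_unit_sphere ⟨u, hu.2⟩)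
  refine (Metric.isBounded_closedBall (x := 0) (r := max 1 ε⁻¹)).subset ?_
  rintro v ⟨hvC, hfv⟩
  rw [mem_closedBall_zero_iff]
  rcases eq_or_ne v 0 with rfl | hv
  · simp
  have hr : 0 < ‖v‖ := norm_pos_iff.mpr hv
  have hu : ‖v‖⁻¹ • v ∈ C ∩ Metric.sphere 0 1 :=
    ⟨hcone _ (inv_pos.mpr hr) v hvC, by rw [mem_sphere_zero_iff_norm]; exact norm_smul_inv_norm hv⟩
  have hrd : ‖v‖ ^ d * ε ≤ 1 := calc
    ‖v‖ ^ d * ε ≤ ‖v‖ ^ d * f (‖v‖⁻¹ • v) := by gcongr; exact hεf _ hu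
    _ = f v := by rw [← hhom _ hr _ hu.1, smul_inv_smul₀ hr.ne']
    _ ≤ 1 := hfv
  rcases le_or_gt ‖v‖ 1 with h1 | h1
  · exact h1.trans (le_max_left _ _)
  · refine le_max_of_le_right ((le_self_pow₀ h1.le hd.ne').trans ?_)
    rwa [← one_div, le_div_iff₀ hε]

lemma isBounded_qhom_le_one {q : ℝ[X]} (hdeg : 0 < q.natDegree) (hq : ∀ y, 0 < q.eval y) :
    IsBounded {v : ℝ × ℝ | 0 ≤ v.2 ∧ qhom q v.1 v.2 ≤ 1} :=
  isBounded_setOf_le_one_of_homogeneous hdeg (continuous_qhom q).continuousOn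
    (isClosed_le continuous_const continuous_snd)
    (fun _ ht _ hv => mul_nonneg ht.le hv)
    (fun t _ v _ => qhom_mul_mul q t v.1 v.2)
    (fun _ hv hv0 => qhom_pos hdeg hq hv hv0)

lemma isBounded_setOf_sum_sq_le {ι : Type*} [Fintype ι] (N : ℝ) :
    IsBounded {x : ι → ℝ | ∑ j, x j ^ 2 ≤ N} := by
  refine (Metric.isBounded_closedBall (x := 0) (r := √N)).subset fun x hx => ?_
  rw [mem_closedBall_zero_iff, pi_norm_le_iff_of_nonneg (Real.sqrt_nonneg N)]
  intro j
  exact Real.abs_le_sqrt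
    ((Finset.single_le_sum (fun j _ => sq_nonneg (x j)) (Finset.mem_univ j)).trans hx)

lemma IsSumSq.map {R S F : Type*} [CommSemiring R] [CommSemiring S] [FunLike F R S]
    [RingHomClass F R S] (f : F) {a : R} (ha : IsSumSq a) : IsSumSq (f a) := by
  induction ha with
  | zero => rw [map_zero]; exact .zero
  | sq_add b _ ih => rw [map_add, map_mul]; exact .sq_add (f b) ih

lemma QuadMod.nonneg_of_map {R S : Type*} [CommRing R] [CommRing S] [LinearOrder S]
    [IsStrictOrderedRing S] {s : ℕ} {g : Fin s → R} {p : R} (hp : QuadMod g p) (f : R →+* S)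
    (hg : ∀ i, 0 ≤ f (g i)) : 0 ≤ f p := by
  obtain ⟨σ₀, σ, hσ₀, hσ, rfl⟩ := hp
  simp only [map_add, map_sum, map_mul]
  exact add_nonneg (hσ₀.map f).nonneg
    (Finset.sum_nonneg fun i _ => mul_nonneg ((hσ i).map f).nonneg (hg i))

section Stilde

variable {n s : ℕ} {g : Fin s → (MvPolynomial (Fin n) ℝ)[X]} {q : ℝ[X]}

lemma isClosed_stilde (g : Fin s → (MvPolynomial (Fin n) ℝ)[X]) (q : ℝ[X]) :
    IsClosed (Stilde g q) := by
  simp only [Stilde, Set.ofPred_and, Set.ofPred_forall]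
  exact (isClosed_iInter fun i => isClosed_le continuous_const (continuous_fhom (g i))).inter
    ((isClosed_eq ((continuous_qhom q).comp continuous_snd) continuous_const).inter
      (isClosed_le continuous_const (continuous_snd.comp continuous_snd)))

lemma sum_sq_le_of_mem_stilde {N : ℝ}
    (harch : QuadMod g (C (MvPolynomial.C N - ∑ j, MvPolynomial.X j ^ 2)))
    (heven : ∀ i, Even (g i).natDegree)
    (hSinf : ∀ x : Fin n → ℝ,
      (∀ i, 0 ≤ MvPolynomial.eval x (g i).leadingCoeff) → ∑ j, x j ^ 2 ≤ N)
    (hdeg : 0 < q.natDegree) {p : (Fin n → ℝ) × ℝ × ℝ} (hp : p ∈ Stilde g q) :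
    ∑ j, p.1 j ^ 2 ≤ N := by
  obtain ⟨x, y, z⟩ := p
  obtain ⟨hg, hq1, hz⟩ := hp
  dsimp only at hg hq1 hz ⊢
  rcases hz.eq_or_lt with rfl | hz
  · have hy : y ≠ 0 := by
      rintro rfl
      rw [qhom_zero_right, zero_pow hdeg.ne', mul_zero] at hq1
      exact zero_ne_one hq1
    refine hSinf x fun i => ?_
    have := hg i
    rw [fhom_zero_right] at this
    exact nonneg_of_mul_nonneg_left this ((heven i).pow_pos hy)
  · have := harch.nonneg_of_map (eval₂RingHom (MvPolynomial.eval x) (y / z)) fun i => by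
      have := hg i
      rw [fhom_of_ne_zero _ _ _ hz.ne'] at this
      exact nonneg_of_mul_nonneg_right this (pow_pos hz _)
    simpa [sub_nonneg, eval₂_finsetSum, eval₂_pow] using this

end Stilde

theorem stmt_10_general (n s : ℕ) (g : Fin s → Polynomial (MvPolynomial (Fin n) ℝ))
    (N : ℝ)
    (harch : QuadMod g
      (Polynomial.C (MvPolynomial.C N - ∑ j, MvPolynomial.X j ^ 2)))
    (heven : ∀ i, Even (g i).natDegree)
    (hSinf : ∀ x : Fin n → ℝ,
      (∀ i, 0 ≤ MvPolynomial.eval x (g i).leadingCoeff) → ∑ j, x j ^ 2 ≤ N)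
    (q : Polynomial ℝ) (h0 : 0 < q.natDegree) (hq : ∀ y : ℝ, 0 < q.eval y) :
    IsCompact (Stilde g q) := by
  refine Metric.isCompact_of_isClosed_isBounded (isClosed_stilde g q)
    (((isBounded_setOf_sum_sq_le N).prod (isBounded_qhom_le_one h0 hq)).subset ?_)
  intro p hp
  exact ⟨sum_sq_le_of_mem_stilde harch heven hSinf h0 hp, hp.2.2, hp.2.1.le⟩

theorem stmt_10 (n s : ℕ) (g : Fin s → Polynomial (MvPolynomial (Fin n) ℝ))
    (N : ℝ) (hN : 0 < N)
    (harch : QuadMod g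
      (Polynomial.C (MvPolynomial.C N - ∑ j, MvPolynomial.X j ^ 2)))
    (hSne : ∃ (x : Fin n → ℝ) (y : ℝ), ∀ i,
      0 ≤ Polynomial.eval₂ (MvPolynomial.eval x) y (g i))
    (heven : ∀ i, Even (g i).natDegree)
    (hSinf : ∀ x : Fin n → ℝ,
      (∀ i, 0 ≤ MvPolynomial.eval x (g i).leadingCoeff) → ∑ j, x j ^ 2 ≤ N)
    (q : Polynomial ℝ) (h0 : 0 < q.natDegree) (hq : ∀ y : ℝ, 0 < q.eval y) :
    IsCompact (Stilde g q) :=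
  stmt_10_general n s g N harch heven hSinf q h0 hq
end

section
/- The conclusion of the main theorem fails without the positivity-at-infinity assumption: for g₁ = (1 − X²)³ ∈ ℝ[X,Y] and f = (1 − X²)Y² + 1, the polynomial f is strictly positive on S = [−1,1] × ℝ and the quadratic module M(g₁) contains 4/3 − X², yet for no non-constant q ∈ ℝ[Y] positive on ℝ and no M ∈ ℤ_{≥0} does q^M f belong to M(g₁). -/
open Polynomial

/-- `g₁ = (1 - X²)³` viewed in `ℝ[X][Y]` (inner variable `X`, outer variable `Y`). -/
noncomputable def gEx : Polynomial (Polynomial ℝ) := (1 - C X ^ 2) ^ 3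

/-- `f = (1 - X²)Y² + 1` in `ℝ[X][Y]`. -/
noncomputable def fEx : Polynomial (Polynomial ℝ) := (1 - C X ^ 2) * X ^ 2 + 1

/-!
Suppose `q^M f = Σ pᵢ² + (Σ rⱼ²) g₁`. Since `g₁ > 0` on `(-1, 1)`, the top coefficients in `Y`
of the squares cannot cancel, so `2 deg_Y pᵢ ≤ M deg q + 2`. As `g₁` vanishes to order three at
`X = 1`, putting `aᵢ = pᵢ(1, Y)` and `bᵢ = ∂ₓpᵢ(1, Y)`, the identity and its `X`-derivative at
`X = 1` give `Σ aᵢ² = q^M` and `Σ aᵢbᵢ = -Y² q^M`. By Cauchy–Schwarz `Y⁴ q^{2M} ≤ q^M Σ bᵢ²` on `ℝ`,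
which is impossible: the left side has degree `2M deg q + 4` and positive leading coefficient,
the right side has degree at most `2M deg q + 2`.
-/

theorem IsSumSq.exists_fin_sum_sq {R : Type*} [CommSemiring R] {s : R} (h : IsSumSq s) :
    ∃ n, ∃ f : Fin n → R, s = ∑ i, f i ^ 2 := by
  induction h with
  | zero => exact ⟨0, ![], by simp⟩
  | sq_add a _ ih =>
    obtain ⟨n, f, rfl⟩ := ih
    exact ⟨n + 1, Fin.cons a f, by simp [Fin.sum_univ_succ, sq]⟩

namespace Polynomial

theorem two_mul_natDegree_le_natDegree_sum_sq_add_sum_sq_mul {A ι κ : Type*} [CommRing A]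
    [Fintype ι] [Fintype κ] {g : A}
    (hg : ∀ (u : ι → A) (v : κ → A), ∑ i, u i ^ 2 + (∑ j, v j ^ 2) * g = 0 → u = 0 ∧ v = 0)
    (P : ι → A[X]) (R : κ → A[X]) (i : ι) :
    2 * (P i).natDegree ≤ (∑ i, P i ^ 2 + (∑ j, R j ^ 2) * C g).natDegree := by
  set S := ∑ i, P i ^ 2 + (∑ j, R j ^ 2) * C g
  suffices H : ∀ N, (∀ i, (P i).natDegree ≤ N) → (∀ j, (R j).natDegree ≤ N) →
      ∀ i, 2 * (P i).natDegree ≤ S.natDegree by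
    refine H (∑ i, (P i).natDegree + ∑ j, (R j).natDegree) (fun i => ?_) (fun j => ?_) i
    · exact (Finset.single_le_sum (f := fun i => (P i).natDegree) (fun i _ => Nat.zero_le _)
        (Finset.mem_univ i)).trans (Nat.le_add_right _ _)
    · exact (Finset.single_le_sum (f := fun j => (R j).natDegree) (fun j _ => Nat.zero_le _)
        (Finset.mem_univ j)).trans (Nat.le_add_left _ _)
  intro N
  induction N with
  | zero => intro hP _ i; simp [Nat.le_zero.1 (hP i)]
  | succ N ih =>
    intro hP hR i
    by_cases hS : 2 * (N + 1) ≤ S.natDegree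
    · exact (Nat.mul_le_mul_left 2 (hP i)).trans hS
    have htop : ∑ i, (P i).coeff (N + 1) ^ 2 + (∑ j, (R j).coeff (N + 1) ^ 2) * g = 0 := by
      rw [← coeff_eq_zero_of_natDegree_lt (not_le.1 hS)]
      simp only [S, coeff_add, finsetSum_coeff, coeff_mul_C, coeff_pow_of_natDegree_le (hP _),
        coeff_pow_of_natDegree_le (hR _)]
    obtain ⟨hu, hv⟩ := hg _ _ htop
    exact ih (fun i => natDegree_le_pred (hP i) (congrFun hu i))
      (fun j => natDegree_le_pred (hR j) (congrFun hv j)) i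

theorem sum_sq_add_sum_sq_mul_eq_zero {ι κ : Type*} [Fintype ι] [Fintype κ] {g : ℝ[X]}
    (hg : {t | 0 < g.eval t}.Infinite) (u : ι → ℝ[X]) (v : κ → ℝ[X])
    (h : ∑ i, u i ^ 2 + (∑ j, v j ^ 2) * g = 0) : u = 0 ∧ v = 0 := by
  have hroot : ∀ t, 0 < g.eval t → (∀ i, (u i).IsRoot t) ∧ ∀ j, (v j).IsRoot t := by
    intro t ht
    have hev := congrArg (eval t) h
    simp only [eval_add, eval_mul, eval_finsetSum, eval_pow, eval_zero] at hev
    have hu := Finset.sum_nonneg fun i (_ : i ∈ Finset.univ) => sq_nonneg ((u i).eval t)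
    have hv := Finset.sum_nonneg fun j (_ : j ∈ Finset.univ) => sq_nonneg ((v j).eval t)
    have hu0 : ∑ i, (u i).eval t ^ 2 = 0 := by nlinarith
    have hv0 : ∑ j, (v j).eval t ^ 2 = 0 := by nlinarith
    simp only [Finset.sum_eq_zero_iff_of_nonneg (fun _ _ => sq_nonneg _), Finset.mem_univ,
      true_implies, sq_eq_zero_iff] at hu0 hv0
    exact ⟨hu0, hv0⟩
  exact ⟨_root_.funext fun i => eq_zero_of_infinite_isRoot _ (hg.mono fun t ht => (hroot t ht).1 i),
    _root_.funext fun j => eq_zero_of_infinite_isRoot _ (hg.mono fun t ht => (hroot t ht).2 j)⟩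

theorem exists_eval_lt_of_natDegree_lt {p r : ℝ[X]} (hp : 0 < p.leadingCoeff)
    (h : r.natDegree < p.natDegree) : ∃ y, r.eval y < p.eval y := by
  have hdeg : (p - r).natDegree = p.natDegree := natDegree_sub_eq_left_of_natDegree_lt h
  have hlc : (p - r).leadingCoeff = p.leadingCoeff :=
    leadingCoeff_sub_of_degree_lt (degree_lt_degree h)
  have hpos : 0 < (p - r).degree :=
    natDegree_pos_iff_degree_pos.1 (hdeg ▸ (Nat.zero_le _).trans_lt h)
  obtain ⟨y, hy⟩ := ((tendsto_atTop_of_leadingCoeff_nonneg (p - r) hpos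
    (hlc ▸ hp.le)).eventually_gt_atTop 0).exists
  exact ⟨y, by simpa [sub_pos] using hy⟩

theorem lt_natDegree_sum_sq_of_sum_mul_sq_eq {ι : Type*} [Fintype ι] {q : ℝ[X]} (hq : q ≠ 0)
    {M : ℕ} {a b : ι → ℝ[X]} (ha : ∑ i, a i ^ 2 = q ^ M)
    (hab : (∑ i, a i * b i) ^ 2 = X ^ 4 * q ^ (2 * M)) :
    M * q.natDegree + 2 < (∑ i, b i ^ 2).natDegree := by
  by_contra! hτ
  have hlc : 0 < (X ^ 4 * q ^ (2 * M)).leadingCoeff := by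
    rw [leadingCoeff_mul, leadingCoeff_X_pow, one_mul, leadingCoeff_pow]
    exact (even_two_mul M).pow_pos (leadingCoeff_ne_zero.2 hq)
  have hlt : (q ^ M * ∑ i, b i ^ 2).natDegree < (X ^ 4 * q ^ (2 * M)).natDegree := by
    rw [natDegree_mul (pow_ne_zero _ X_ne_zero) (pow_ne_zero _ hq), natDegree_X_pow, natDegree_pow]
    calc (q ^ M * ∑ i, b i ^ 2).natDegree ≤ M * q.natDegree + (M * q.natDegree + 2) :=
          natDegree_mul_le.trans (add_le_add natDegree_pow_le hτ)
      _ < 4 + 2 * M * q.natDegree := by ring_nf; omega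
  obtain ⟨y, hy⟩ := exists_eval_lt_of_natDegree_lt hlc hlt
  refine hy.not_ge ?_
  calc (X ^ 4 * q ^ (2 * M)).eval y = (∑ i, (a i).eval y * (b i).eval y) ^ 2 := by
        rw [← hab, eval_pow, eval_finsetSum]; simp only [eval_mul]
    _ ≤ (∑ i, (a i).eval y ^ 2) * ∑ i, (b i).eval y ^ 2 :=
        Finset.sum_mul_sq_le_sq_mul_sq _ _ _
    _ = (q ^ M * ∑ i, b i ^ 2).eval y := by
        simp only [← ha, eval_mul, eval_finsetSum, eval_pow]

theorem map_evalRingHom_map_C {R : Type*} [CommRing R] (a : R) (q : R[X]) :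
    (q.map C).map (evalRingHom a) = q := by
  ext1 n; simp [coeff_map]

section innerDerivative

variable {R : Type*} [CommRing R]

noncomputable def innerDerivative : Derivation ℤ R[X][X] R[X][X] :=
  letI : Differential R[X] := ⟨derivative'.restrictScalars ℤ⟩
  Differential.mapCoeffs

@[simp] theorem coeff_innerDerivative (p : R[X][X]) (n : ℕ) :
    (innerDerivative p).coeff n = derivative (p.coeff n) := rfl

@[simp] theorem innerDerivative_C (a : R[X]) : innerDerivative (C a) = C (derivative a) := by
  ext1 n; simp [coeff_C]; split_ifs <;> simp

@[simp] theorem innerDerivative_X : innerDerivative (X : R[X][X]) = 0 := by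
  ext1 n; simp [coeff_X]; split_ifs <;> simp

@[simp] theorem innerDerivative_map_C (p : R[X]) : innerDerivative (p.map C) = 0 := by
  ext1 n; simp

theorem natDegree_innerDerivative_le (p : R[X][X]) :
    (innerDerivative p).natDegree ≤ p.natDegree :=
  natDegree_le_iff_coeff_eq_zero.2 fun _ hn => by simp [coeff_eq_zero_of_natDegree_lt hn]

end innerDerivative

end Polynomial

theorem zero_lt_eval₂_fEx {x : ℝ} (hx₁ : -1 ≤ x) (hx₂ : x ≤ 1) (y : ℝ) :
    0 < eval₂ (evalRingHom x) y fEx := by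
  have : 0 ≤ (1 - x ^ 2) * y ^ 2 := mul_nonneg (by nlinarith) (sq_nonneg y)
  simp only [fEx, eval₂_add, eval₂_mul, eval₂_sub, eval₂_pow, eval₂_one, eval₂_C, eval₂_X,
    coe_evalRingHom, eval_X]
  linarith

theorem C_four_thirds_sub_X_sq : C (4 / 3 : ℝ) - X ^ 2 =
    3 * (C (2 / 3) * X ^ 3 - X) ^ 2 + 3 * C (2 / 3) ^ 2 * (1 - X ^ 2) ^ 3 := by
  refine Polynomial.funext fun t => ?_
  simp only [eval_add, eval_mul, eval_pow, eval_sub, eval_C, eval_X, eval_one, eval_ofNat]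
  ring

theorem quadMod1_gEx_C_four_thirds_sub_X_sq : QuadMod1 gEx (C (C (4 / 3 : ℝ) - X ^ 2)) := by
  refine ⟨3 * C (C (2 / 3) * X ^ 3 - X) ^ 2, 3 * C (C (2 / 3)) ^ 2,
    .mul (.natCast 3) (IsSquare.sq _).isSumSq, .mul (.natCast 3) (IsSquare.sq _).isSumSq, ?_⟩
  simp [gEx, C_four_thirds_sub_X_sq, C_ofNat]

theorem gEx_eq : gEx = C ((1 - X ^ 2) ^ 3) := by simp [gEx]

theorem natDegree_map_C_pow_mul_fEx_le (q : ℝ[X]) (M : ℕ) :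
    ((q.map C) ^ M * fEx).natDegree ≤ M * q.natDegree + 2 := by
  refine natDegree_mul_le.trans (add_le_add ?_ ?_)
  · exact natDegree_pow_le.trans (Nat.mul_le_mul_left M natDegree_map_le)
  · unfold fEx; compute_degree

theorem infinite_setOf_one_sub_X_sq_pow_three_pos :
    {t : ℝ | 0 < ((1 - X ^ 2) ^ 3 : ℝ[X]).eval t}.Infinite :=
  (Set.Ioo_infinite (by norm_num : (-1 : ℝ) < 1)).mono fun t ht => by
    have : 0 < 1 - t ^ 2 := by nlinarith [ht.1, ht.2]
    simpa using pow_pos this 3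

theorem map_evalRingHom_one_fEx : fEx.map (evalRingHom 1) = 1 := by simp [fEx]

theorem map_evalRingHom_one_gEx : gEx.map (evalRingHom 1) = 0 := by simp [gEx]

theorem map_evalRingHom_one_innerDerivative_fEx :
    (innerDerivative fEx).map (evalRingHom 1) = -(2 * X ^ 2) := by
  simp [fEx, Derivation.leibniz_pow, C_ofNat]; ring

theorem map_evalRingHom_one_innerDerivative_gEx :
    (innerDerivative gEx).map (evalRingHom 1) = 0 := by
  simp [gEx, Derivation.leibniz_pow]

theorem not_quadMod1_gEx_map_C_pow_mul_fEx {q : ℝ[X]} (hq : q ≠ 0) (M : ℕ) :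
    ¬ QuadMod1 gEx ((q.map C) ^ M * fEx) := by
  rintro ⟨_, _, hσ₀, hσ₁, h⟩
  obtain ⟨n, P, rfl⟩ := hσ₀.exists_fin_sum_sq
  obtain ⟨m, R, rfl⟩ := hσ₁.exists_fin_sum_sq
  have hP (i) : 2 * (P i).natDegree ≤ M * q.natDegree + 2 := by
    have := two_mul_natDegree_le_natDegree_sum_sq_add_sum_sq_mul
      (sum_sq_add_sum_sq_mul_eq_zero infinite_setOf_one_sub_X_sq_pow_three_pos) P R i
    rw [← gEx_eq, ← h] at this
    exact this.trans (natDegree_map_C_pow_mul_fEx_le q M)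
  set a := fun i => (P i).map (evalRingHom 1)
  set b := fun i => (innerDerivative (P i)).map (evalRingHom 1)
  have ha : ∑ i, a i ^ 2 = q ^ M := by
    simpa only [Polynomial.map_mul, Polynomial.map_pow, Polynomial.map_add, Polynomial.map_sum,
      map_evalRingHom_map_C, map_evalRingHom_one_fEx, map_evalRingHom_one_gEx, mul_one, mul_zero,
      add_zero] using (congrArg (map (evalRingHom 1)) h).symm
  have hab : ∑ i, a i * b i = -(X ^ 2 * q ^ M) := by
    have := congrArg (fun p => (innerDerivative p).map (evalRingHom 1)) h
    simp [Derivation.leibniz, Derivation.leibniz_pow, Polynomial.map_sum, Polynomial.map_mul,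
      map_evalRingHom_map_C, map_evalRingHom_one_gEx, map_evalRingHom_one_innerDerivative_fEx,
      map_evalRingHom_one_innerDerivative_gEx, ← Finset.mul_sum] at this
    refine mul_left_cancel₀ (two_ne_zero' ℝ[X]) ?_
    linear_combination -this
  have hb := lt_natDegree_sum_sq_of_sum_mul_sq_eq hq ha (by rw [hab]; ring)
  have hb' : (∑ i, b i ^ 2).natDegree ≤ M * q.natDegree + 2 :=
    natDegree_sum_le_of_forall_le _ _ fun i _ => natDegree_pow_le.trans <|
      (Nat.mul_le_mul_left 2 <| natDegree_map_le.trans (natDegree_innerDerivative_le _)).trans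
        (hP i)
  exact hb'.not_gt hb

theorem stmt_14 :
    -- f is strictly positive on S = [-1,1] × ℝ
    (∀ x y : ℝ, -1 ≤ x → x ≤ 1 →
      0 < Polynomial.eval₂ (Polynomial.evalRingHom x) y fEx) ∧
    -- 4/3 - X² belongs to M(g₁)
    QuadMod1 gEx (C (Polynomial.C (4 / 3 : ℝ) - X ^ 2)) ∧
    -- but no q^M · f is in M(g₁)
    (∀ q : Polynomial ℝ, 0 < q.natDegree → (∀ y : ℝ, 0 < q.eval y) →
      ∀ M : ℕ, ¬ QuadMod1 gEx ((q.map Polynomial.C) ^ M * fEx)) :=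
  ⟨fun _ y hx₁ hx₂ => zero_lt_eval₂_fEx hx₁ hx₂ y, quadMod1_gEx_C_four_thirds_sub_X_sq,
    fun _ hq _ M => not_quadMod1_gEx_map_C_pow_mul_fEx (ne_zero_of_natDegree_gt hq) M⟩
end

section
/- In ℝ[X,Y] one has the identity 4/3 − X² = (4/3)X²(X² − 3/2)² + (4/3)(1 − X²)³, so 4/3 − X² belongs to the quadratic module generated by (1 − X²)³. -/
open Polynomial

theorem isSumSq_mul_self' {R : Type*} [CommRing R] (a : R) : IsSumSq (a * a) := by
  simpa using IsSumSq.sq_add a 0 IsSumSq.zero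

theorem stmt_15 :
    ((C (Polynomial.C (4 / 3 : ℝ)) - C X ^ 2 : Polynomial (Polynomial ℝ)) =
      C (Polynomial.C (4 / 3 : ℝ)) * C X ^ 2 *
        (C X ^ 2 - C (Polynomial.C (3 / 2 : ℝ))) ^ 2 +
      C (Polynomial.C (4 / 3 : ℝ)) * (1 - C X ^ 2) ^ 3) ∧
    QuadMod1 ((1 - C X ^ 2 : Polynomial (Polynomial ℝ)) ^ 3)
      (C (Polynomial.C (4 / 3 : ℝ)) - C X ^ 2) := by
  set a : Polynomial (Polynomial ℝ) := C (Polynomial.C (4 / 3 : ℝ)) with ha_def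
  set b : Polynomial (Polynomial ℝ) := C (Polynomial.C (3 / 2 : ℝ)) with hb_def
  set x : Polynomial (Polynomial ℝ) := C X with hx_def
  have ha : 3 * a = 4 := by
    have h3 : (C (Polynomial.C (3 : ℝ)) : Polynomial (Polynomial ℝ)) = 3 := by
      norm_num [map_ofNat]
    rw [ha_def, ← h3, ← map_mul, ← map_mul]
    norm_num [map_ofNat]
  have hab : a * b = 2 := by
    rw [ha_def, hb_def, ← map_mul, ← map_mul]
    norm_num [map_ofNat]
  have hab2 : a * b ^ 2 = 3 := by
    rw [ha_def, hb_def, ← map_pow, ← map_pow, ← map_mul, ← map_mul]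
    norm_num [map_ofNat]
  have h1 : a - x ^ 2 = a * x ^ 2 * (x ^ 2 - b) ^ 2 + a * (1 - x ^ 2) ^ 3 := by
    linear_combination (x ^ 2 - x ^ 4) * ha + 2 * x ^ 4 * hab - x ^ 2 * hab2
  refine ⟨h1, ?_⟩
  set t : Polynomial (Polynomial ℝ) := C (Polynomial.C (2 / Real.sqrt 3)) with ht_def
  have hk : t * t = a := by
    rw [ht_def, ha_def, ← map_mul, ← map_mul]
    congr 2
    rw [div_mul_div_comm, Real.mul_self_sqrt (by norm_num)]
    norm_num
  refine ⟨(t * x * (x ^ 2 - b)) * (t * x * (x ^ 2 - b)), t * t,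
    isSumSq_mul_self' _, isSumSq_mul_self' _, ?_⟩
  rw [hk]
  linear_combination h1 - x ^ 2 * (x ^ 2 - b) ^ 2 * hk
end

section
/- If there exist an even M ≥ 0 and polynomials p_{ji}, q_{ji} ∈ ℝ[X] such that q(Y)^M((1−X²)Y² + 1) = Σ_j(Σ_i p_{ji}(X)Y^i)² + Σ_j(Σ_i q_{ji}(X)Y^i)²(1−X²)³, where q ∈ ℝ[Y] has degree m₀ > 0 and positive leading coefficient q_{m₀}, then comparing the coefficients of the top degree 2m' = m₀M + 2 in Y yields q_{m₀}^M (1 − X²) = Σ_j p_{jm'}(X)² + Σ_j q_{jm'}(X)²(1 − X²)³; hence 1 − X² belongs to the quadratic module generated by (1 − X²)³ in ℝ[X]. -/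
open Polynomial

/-- A finite sum of squares is a sum of squares. -/
lemma isSumSq_finset_sum_sq {R : Type*} [CommRing R] {ι : Type*} (s : Finset ι) (f : ι → R) :
    IsSumSq (∑ i ∈ s, (f i) ^ 2) := by
  have : (∑ i ∈ s, (f i) ^ 2) = ∑ i ∈ s, f i * f i := by
    simp [sq]
  rw [this]
  exact IsSumSq.sum_mul_self s f

/-- Top coefficient of a square. -/
lemma coeff_sq_of_natDegree_le {R : Type*} [CommRing R] (p : Polynomial R) {d : ℕ}
    (h : p.natDegree ≤ d) : (p ^ 2).coeff (2 * d) = (p.coeff d) ^ 2 := by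
  rcases eq_or_lt_of_le h with heq | hlt
  · subst heq
    rw [sq, sq, two_mul, coeff_mul_degree_add_degree, coeff_natDegree]
  · have h1 : (p ^ 2).natDegree < 2 * d :=
      lt_of_le_of_lt natDegree_pow_le (by omega)
    rw [coeff_eq_zero_of_natDegree_lt h1, coeff_eq_zero_of_natDegree_lt hlt]
    ring

/-- If a sum of squares plus `(1-X²)³` times a sum of squares vanishes,
then all the polynomials vanish. -/
lemma aux_zero {J : ℕ} (a b : Fin J → Polynomial ℝ)
    (h : (0 : Polynomial ℝ) =
      ∑ j, (a j) ^ 2 + (∑ j, (b j) ^ 2) * ((1 : Polynomial ℝ) - X ^ 2) ^ 3) (j : Fin J) :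
    a j = 0 ∧ b j = 0 := by
  have hroot : ∀ x ∈ Set.Ioo (-1 : ℝ) 1, (a j).IsRoot x ∧ (b j).IsRoot x := by
    intro x hx
    have hx1 : (0 : ℝ) < 1 - x ^ 2 := by nlinarith [hx.1, hx.2]
    have he := congrArg (Polynomial.eval x) h
    simp only [eval_add, eval_mul, eval_pow, eval_finset_sum, eval_sub, eval_one, eval_X,
      eval_zero] at he
    have hSA : (0 : ℝ) ≤ ∑ j, (a j).eval x ^ 2 :=
      Finset.sum_nonneg fun i _ => sq_nonneg _
    have hSB : (0 : ℝ) ≤ ∑ j, (b j).eval x ^ 2 :=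
      Finset.sum_nonneg fun i _ => sq_nonneg _
    have hg : (0 : ℝ) < (1 - x ^ 2) ^ 3 := by positivity
    have hSA0 : (∑ j, (a j).eval x ^ 2) = 0 := by nlinarith
    have hSB0 : (∑ j, (b j).eval x ^ 2) = 0 := by nlinarith
    have ha : (a j).eval x ^ 2 = 0 := by
      have h1 : (a j).eval x ^ 2 ≤ ∑ j, (a j).eval x ^ 2 :=
        Finset.single_le_sum (f := fun i => (a i).eval x ^ 2)
          (fun i _ => sq_nonneg _) (Finset.mem_univ j)
      nlinarith [sq_nonneg ((a j).eval x)]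
    have hb : (b j).eval x ^ 2 = 0 := by
      have h1 : (b j).eval x ^ 2 ≤ ∑ j, (b j).eval x ^ 2 :=
        Finset.single_le_sum (f := fun i => (b i).eval x ^ 2)
          (fun i _ => sq_nonneg _) (Finset.mem_univ j)
      nlinarith [sq_nonneg ((b j).eval x)]
    exact ⟨pow_eq_zero_iff (by norm_num) |>.mp ha, pow_eq_zero_iff (by norm_num) |>.mp hb⟩
  have hinf : (Set.Ioo (-1 : ℝ) 1).Infinite := Set.Ioo_infinite (by norm_num)
  constructor
  · exact eq_zero_of_infinite_isRoot _ (hinf.mono fun x hx => (hroot x hx).1)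
  · exact eq_zero_of_infinite_isRoot _ (hinf.mono fun x hx => (hroot x hx).2)

theorem stmt_16 (q : Polynomial ℝ) (hm0 : 0 < q.natDegree)
    (hlc : 0 < q.leadingCoeff) (M : ℕ) (hM : Even M)
    (J : ℕ) (P Q : Fin J → Polynomial (Polynomial ℝ))
    (heq : (q.map Polynomial.C) ^ M *
        ((1 - C X ^ 2 : Polynomial (Polynomial ℝ)) * X ^ 2 + 1) =
      ∑ j, (P j) ^ 2 + (∑ j, (Q j) ^ 2) * (1 - C X ^ 2) ^ 3) :
    (q.leadingCoeff ^ M • ((1 : Polynomial ℝ) - X ^ 2) =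
      ∑ j, ((P j).coeff (q.natDegree * M / 2 + 1)) ^ 2 +
      (∑ j, ((Q j).coeff (q.natDegree * M / 2 + 1)) ^ 2) * (1 - X ^ 2) ^ 3) ∧
    QuadMod1 (((1 : Polynomial ℝ) - X ^ 2) ^ 3) (1 - X ^ 2) := by
  classical
  set m0 := q.natDegree with hm0def
  set m' := m0 * M / 2 + 1 with hm'def
  have hmod : m0 * M % 2 = 0 := Nat.even_iff.mp (hM.mul_left m0)
  have h2m' : 2 * m' = m0 * M + 2 := by omega
  have hCinj : Function.Injective (Polynomial.C : ℝ →+* Polynomial ℝ) := C_injective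
  have hqC : (q.map (Polynomial.C : ℝ →+* Polynomial ℝ)).natDegree = m0 :=
    natDegree_map_eq_of_injective hCinj q
  -- the constant `1 - C X ^ 2` and its cube
  have hg1 : (1 - C X ^ 2 : Polynomial (Polynomial ℝ)) = C ((1 : Polynomial ℝ) - X ^ 2) := by
    simp [map_sub, map_pow]
  have hg3 : ((1 - C X ^ 2 : Polynomial (Polynomial ℝ))) ^ 3 =
      C (((1 : Polynomial ℝ) - X ^ 2) ^ 3) := by
    rw [hg1, map_pow]
  -- degree bound on the left-hand side
  have hAdeg : ((q.map (Polynomial.C : ℝ →+* Polynomial ℝ)) ^ M).natDegree ≤ m0 * M := by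
    refine natDegree_pow_le.trans ?_
    rw [hqC, mul_comm]
  have hBdeg : ((1 - C X ^ 2 : Polynomial (Polynomial ℝ)) * X ^ 2 + 1).natDegree ≤ 2 := by
    refine natDegree_add_le_of_degree_le (natDegree_mul_le.trans ?_) (by simp)
    rw [hg1, natDegree_C, natDegree_X_pow]
  have hLdeg : ((q.map (Polynomial.C : ℝ →+* Polynomial ℝ)) ^ M *
      ((1 - C X ^ 2 : Polynomial (Polynomial ℝ)) * X ^ 2 + 1)).natDegree ≤ m0 * M + 2 :=
    natDegree_mul_le.trans (add_le_add hAdeg hBdeg)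
  -- degree (in Y) bounds on the P's and Q's
  have hdeg : ∀ j, (P j).natDegree ≤ m' ∧ (Q j).natDegree ≤ m' := by
    set D := Finset.univ.sup (fun j => max (P j).natDegree (Q j).natDegree) with hDdef
    have hDle : ∀ j, (P j).natDegree ≤ D ∧ (Q j).natDegree ≤ D := by
      intro j
      have h1 := Finset.le_sup (f := fun j => max (P j).natDegree (Q j).natDegree)
        (Finset.mem_univ j)
      exact ⟨le_trans (le_max_left _ _) h1, le_trans (le_max_right _ _) h1⟩
    have hD : D ≤ m' := by
      by_contra hDm
      push_neg at hDm
      -- compare coefficients at 2 * D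
      have h2D : m0 * M + 2 < 2 * D := by omega
      have hc := congrArg (fun r => r.coeff (2 * D)) heq
      rw [coeff_eq_zero_of_natDegree_lt (lt_of_le_of_lt hLdeg h2D)] at hc
      rw [coeff_add, finset_sum_coeff, hg3, coeff_mul_C, finset_sum_coeff] at hc
      have hcP : ∀ j ∈ Finset.univ, ((P j) ^ 2).coeff (2 * D) = ((P j).coeff D) ^ 2 :=
        fun j _ => coeff_sq_of_natDegree_le _ (hDle j).1
      have hcQ : ∀ j ∈ Finset.univ, ((Q j) ^ 2).coeff (2 * D) = ((Q j).coeff D) ^ 2 :=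
        fun j _ => coeff_sq_of_natDegree_le _ (hDle j).2
      rw [Finset.sum_congr rfl hcP, Finset.sum_congr rfl hcQ] at hc
      -- all the top coefficients vanish
      have hzero := aux_zero (fun j => (P j).coeff D) (fun j => (Q j).coeff D) hc
      -- yet the sup is attained, contradiction
      have hJ : 0 < J := by
        by_contra hJ
        push_neg at hJ
        haveI : IsEmpty (Fin J) := ⟨fun i => by have := i.isLt; omega⟩
        rw [hDdef, Finset.univ_eq_empty, Finset.sup_empty, Nat.bot_eq_zero] at hDm
        omega
      have hne : (Finset.univ : Finset (Fin J)).Nonempty := ⟨⟨0, hJ⟩, Finset.mem_univ _⟩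
      obtain ⟨j0, -, hj0⟩ := Finset.exists_mem_eq_sup Finset.univ hne
        (fun j => max (P j).natDegree (Q j).natDegree)
      rw [← hDdef] at hj0
      rcases max_choice (P j0).natDegree (Q j0).natDegree with hmax | hmax
      · have hPD : (P j0).natDegree = D := by omega
        have hP0 : P j0 ≠ 0 := by
          intro h0
          rw [h0, natDegree_zero] at hPD
          omega
        have := (hzero j0).1
        rw [← hPD, coeff_natDegree] at this
        exact leadingCoeff_ne_zero.mpr hP0 this
      · have hQD : (Q j0).natDegree = D := by omega
        have hQ0 : Q j0 ≠ 0 := by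
          intro h0
          rw [h0, natDegree_zero] at hQD
          omega
        have := (hzero j0).2
        rw [← hQD, coeff_natDegree] at this
        exact leadingCoeff_ne_zero.mpr hQ0 this
    exact fun j => ⟨le_trans (hDle j).1 hD, le_trans (hDle j).2 hD⟩
  -- now extract the coefficient at 2 * m' = m0 * M + 2
  have hc := congrArg (fun r => r.coeff (2 * m')) heq
  -- compute the left-hand side coefficient
  have hLHS : ((q.map (Polynomial.C : ℝ →+* Polynomial ℝ)) ^ M *
      ((1 - C X ^ 2 : Polynomial (Polynomial ℝ)) * X ^ 2 + 1)).coeff (2 * m') =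
      C (q.leadingCoeff ^ M) * ((1 : Polynomial ℝ) - X ^ 2) := by
    rw [mul_add, mul_one, coeff_add]
    rw [coeff_eq_zero_of_natDegree_lt (lt_of_le_of_lt hAdeg (by omega))]
    rw [h2m', ← mul_assoc, hg1]
    rw [coeff_mul_X_pow, coeff_mul_C]
    have hA : ((q.map (Polynomial.C : ℝ →+* Polynomial ℝ)) ^ M).coeff (m0 * M) =
        C (q.leadingCoeff ^ M) := by
      rw [show m0 * M = M * (q.map (Polynomial.C : ℝ →+* Polynomial ℝ)).natDegree by
        rw [hqC]; ring]
      rw [coeff_pow_mul_natDegree, leadingCoeff_map_of_injective hCinj, map_pow]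
    rw [hA, add_zero, mul_comm]
  rw [hLHS, coeff_add, finset_sum_coeff, hg3, coeff_mul_C, finset_sum_coeff] at hc
  have hcP : ∀ j ∈ Finset.univ, ((P j) ^ 2).coeff (2 * m') = ((P j).coeff m') ^ 2 :=
    fun j _ => coeff_sq_of_natDegree_le _ (hdeg j).1
  have hcQ : ∀ j ∈ Finset.univ, ((Q j) ^ 2).coeff (2 * m') = ((Q j).coeff m') ^ 2 :=
    fun j _ => coeff_sq_of_natDegree_le _ (hdeg j).2
  rw [Finset.sum_congr rfl hcP, Finset.sum_congr rfl hcQ] at hc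
  have hmain : q.leadingCoeff ^ M • ((1 : Polynomial ℝ) - X ^ 2) =
      ∑ j, ((P j).coeff m') ^ 2 +
      (∑ j, ((Q j).coeff m') ^ 2) * ((1 : Polynomial ℝ) - X ^ 2) ^ 3 := by
    rw [smul_eq_C_mul]
    exact hc
  refine ⟨hmain, ?_⟩
  -- the quadratic module membership
  have hlcne : q.leadingCoeff ^ (M / 2) ≠ 0 := pow_ne_zero _ (ne_of_gt hlc)
  obtain ⟨c, hc2⟩ : ∃ c : ℝ, c ^ 2 * q.leadingCoeff ^ M = 1 := by
    refine ⟨(q.leadingCoeff ^ (M / 2))⁻¹, ?_⟩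
    have hM2 : M / 2 * 2 = M := Nat.div_mul_cancel hM.two_dvd
    have hpow : q.leadingCoeff ^ M = (q.leadingCoeff ^ (M / 2)) ^ 2 := by
      rw [← pow_mul, hM2]
    rw [hpow, ← mul_pow, inv_mul_cancel₀ hlcne, one_pow]
  have hle : (C c) ^ 2 * C (q.leadingCoeff ^ M) = (1 : Polynomial ℝ) := by
    rw [← map_pow, ← map_mul, hc2, map_one]
  have hmain' : C (q.leadingCoeff ^ M) * ((1 : Polynomial ℝ) - X ^ 2) =
      ∑ j, ((P j).coeff m') ^ 2 +
      (∑ j, ((Q j).coeff m') ^ 2) * ((1 : Polynomial ℝ) - X ^ 2) ^ 3 := by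
    rw [← smul_eq_C_mul]; exact hmain
  refine ⟨(C c) ^ 2 * ∑ j, ((P j).coeff m') ^ 2,
    (C c) ^ 2 * ∑ j, ((Q j).coeff m') ^ 2, ?_, ?_, ?_⟩
  · have : (C c) ^ 2 * ∑ j, ((P j).coeff m') ^ 2 = ∑ j, (C c * (P j).coeff m') ^ 2 := by
      rw [Finset.mul_sum]
      exact Finset.sum_congr rfl fun j _ => by ring
    rw [this]
    exact isSumSq_finset_sum_sq _ _
  · have : (C c) ^ 2 * ∑ j, ((Q j).coeff m') ^ 2 = ∑ j, (C c * (Q j).coeff m') ^ 2 := by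
      rw [Finset.mul_sum]
      exact Finset.sum_congr rfl fun j _ => by ring
    rw [this]
    exact isSumSq_finset_sum_sq _ _
  · linear_combination (C c) ^ 2 * hmain' - ((1 : Polynomial ℝ) - X ^ 2) * hle
end

section
/- For g₁ = X₁Y² + (1 − X₁² − X₂²) and g₂ = −X₁Y² + 1 in ℝ[X₁,X₂,Y]: (a) 2 − X₁² − X₂² = g₁ + g₂ belongs to the quadratic module M(g₁,g₂); (b) the set S = {(x₁,x₂,y) : g₁ ≥ 0, g₂ ≥ 0} contains (0,0,y) for every y ∈ ℝ and is thus unbounded; (c) the set S∞ = {(x₁,x₂) : x₁ ≥ 0 and −x₁ ≥ 0} = {(x₁,x₂) : x₁ = 0} is unbounded. -/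
/-- `g₁ = X₁Y² + (1 - X₁² - X₂²)` in `ℝ[X₁,X₂][Y]`. -/
noncomputable def g1Ex : Polynomial (MvPolynomial (Fin 2) ℝ) :=
  Polynomial.C (MvPolynomial.X 0) * Polynomial.X ^ 2 +
    Polynomial.C (1 - MvPolynomial.X 0 ^ 2 - MvPolynomial.X 1 ^ 2)

/-- `g₂ = -X₁Y² + 1` in `ℝ[X₁,X₂][Y]`. -/
noncomputable def g2Ex : Polynomial (MvPolynomial (Fin 2) ℝ) :=
  -Polynomial.C (MvPolynomial.X 0 : MvPolynomial (Fin 2) ℝ) * Polynomial.X ^ 2 + 1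

open Bornology Set

theorem quadMod_sum {R : Type*} [CommRing R] {s : ℕ} (g : Fin s → R) :
    QuadMod g (∑ i, g i) :=
  ⟨0, fun _ => 1, .zero, fun _ => .one, by simp⟩

theorem not_isBounded_of_lipschitzWith_surjOn {α E : Type*} [PseudoMetricSpace α]
    [NormedAddCommGroup E] [NormedSpace ℝ E] [Nontrivial E] {f : α → E} {K : NNReal}
    (hf : LipschitzWith K f) {s : Set α} (hs : SurjOn f s univ) : ¬ IsBounded s :=
  fun h => NormedSpace.unbounded_univ ℝ E ((hf.isBounded_image h).subset hs)

theorem g1Ex_add_g2Ex :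
    g1Ex + g2Ex = Polynomial.C (MvPolynomial.C 2 - MvPolynomial.X 0 ^ 2 - MvPolynomial.X 1 ^ 2) := by
  simp only [g1Ex, g2Ex, map_sub, map_ofNat, map_one]
  ring

theorem eval_g1Ex_zero (y : ℝ) : Polynomial.eval₂ (MvPolynomial.eval 0) y g1Ex = 1 := by
  simp [g1Ex, Polynomial.eval₂_pow]

theorem eval_g2Ex_zero (y : ℝ) : Polynomial.eval₂ (MvPolynomial.eval 0) y g2Ex = 1 := by
  simp [g2Ex]

theorem stmt_17 :
    -- (a) 2 - X₁² - X₂² = g₁ + g₂ ∈ M(g₁, g₂)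
    ((Polynomial.C (MvPolynomial.C 2 - MvPolynomial.X 0 ^ 2 - MvPolynomial.X 1 ^ 2) :
        Polynomial (MvPolynomial (Fin 2) ℝ)) = g1Ex + g2Ex ∧
      QuadMod ![g1Ex, g2Ex]
        (Polynomial.C (MvPolynomial.C 2 - MvPolynomial.X 0 ^ 2 - MvPolynomial.X 1 ^ 2))) ∧
    -- (b) (0,0,y) ∈ S for all y, and S is unbounded
    ((∀ y : ℝ, ((0 : Fin 2 → ℝ), y) ∈
        {p : (Fin 2 → ℝ) × ℝ |
          0 ≤ Polynomial.eval₂ (MvPolynomial.eval p.1) p.2 g1Ex ∧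
          0 ≤ Polynomial.eval₂ (MvPolynomial.eval p.1) p.2 g2Ex}) ∧
      ¬ Bornology.IsBounded
        {p : (Fin 2 → ℝ) × ℝ |
          0 ≤ Polynomial.eval₂ (MvPolynomial.eval p.1) p.2 g1Ex ∧
          0 ≤ Polynomial.eval₂ (MvPolynomial.eval p.1) p.2 g2Ex}) ∧
    -- (c) S∞ = {x : x₁ = 0} is unbounded
    ({x : Fin 2 → ℝ | 0 ≤ x 0 ∧ 0 ≤ -x 0} = {x : Fin 2 → ℝ | x 0 = 0} ∧
      ¬ Bornology.IsBounded {x : Fin 2 → ℝ | 0 ≤ x 0 ∧ 0 ≤ -x 0}) := by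
  have hsum : (Polynomial.C (MvPolynomial.C 2 - MvPolynomial.X 0 ^ 2 - MvPolynomial.X 1 ^ 2) :
      Polynomial (MvPolynomial (Fin 2) ℝ)) = ∑ i, ![g1Ex, g2Ex] i := by
    simp [g1Ex_add_g2Ex]
  have hline (y : ℝ) :
      0 ≤ Polynomial.eval₂ (MvPolynomial.eval 0) y g1Ex ∧
        0 ≤ Polynomial.eval₂ (MvPolynomial.eval 0) y g2Ex := by
    simp only [eval_g1Ex_zero, eval_g2Ex_zero, zero_le_one, and_self]
  have hSinf : {x : Fin 2 → ℝ | 0 ≤ x 0 ∧ 0 ≤ -x 0} = {x | x 0 = 0} := by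
    ext x
    simp only [mem_ofPred_eq, neg_nonneg, ← le_antisymm_iff, eq_comm]
  refine ⟨⟨g1Ex_add_g2Ex.symm, hsum ▸ quadMod_sum _⟩, ⟨hline, ?_⟩, hSinf, ?_⟩
  · exact not_isBounded_of_lipschitzWith_surjOn LipschitzWith.prod_snd
      fun y _ => ⟨(0, y), hline y, rfl⟩
  · rw [hSinf]
    exact not_isBounded_of_lipschitzWith_surjOn (LipschitzWith.eval 1)
      fun y _ => ⟨![0, y], rfl, rfl⟩
end
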